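/- If X̄_n is normal with mean 0 and variance σ²/n, then for λ_n = a√((log n)/n) with a, σ > 0, the probability P(|X̄_n| > λ_n) equals 2(1 - Φ((a/σ)√(log n))), and hence P(|X̄_n| > λ_n) · n^{a²/(2σ²)} · √(log n) converges to √2 σ/(a√π) as n → ∞. -/

import Mathlib

/-
Scaling by `√v` reduces the two-sided tail of `N(0, v)` at level `c` to that of `N(0, 1)`
at `c / √v`, and symmetry makes it `2 (1 - Φ(c / √v))`. Since `-e^{-x²/2}/x` is an
antiderivative of `(1 + x⁻²) e^{-x²/2}`, the Gaussian tail integral satisfies the Mills-ratio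
bounds `e^{-t²/2} / (t (1 + t⁻²)) ≤ ∫_t^∞ e^{-x²/2} dx ≤ e^{-t²/2} / t`, so
`(1 - Φ(t)) e^{t²/2} t → 1/√(2π)`. For `t = (a/σ)√(log n)` one has `e^{t²/2} = n^{a²/(2σ²)}`.
-/

open Filter MeasureTheory ProbabilityTheory

noncomputable def stdNormalCDF (z : ℝ) : ℝ :=
  ∫ x in Set.Iic z, Real.exp (-x ^ 2 / 2) / Real.sqrt (2 * Real.pi)

open Real Set Topology

lemma gaussianPDFReal_zero_one (x : ℝ) :
    gaussianPDFReal 0 1 x = exp (-x ^ 2 / 2) / √(2 * π) := by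
  simp [gaussianPDFReal, div_eq_inv_mul]

lemma measureReal_gaussianReal_zero_one (s : Set ℝ) :
    (gaussianReal 0 1).real s = ∫ x in s, exp (-x ^ 2 / 2) / √(2 * π) := by
  rw [measureReal_def, gaussianReal_apply_eq_integral 0 one_ne_zero,
    ENNReal.toReal_ofReal (integral_nonneg (gaussianPDFReal_nonneg 0 1))]
  simp only [gaussianPDFReal_zero_one]

lemma one_sub_stdNormalCDF (z : ℝ) : 1 - stdNormalCDF z = (gaussianReal 0 1).real (Ioi z) := by
  rw [stdNormalCDF, ← measureReal_gaussianReal_zero_one, ← compl_Iic,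
    probReal_compl_eq_one_sub measurableSet_Iic]

lemma measureReal_gaussianReal_abs_gt_eq_two_mul_Ioi {v : NNReal} {t : ℝ} (ht : 0 ≤ t) :
    (gaussianReal 0 v).real {x | t < |x|} = 2 * (gaussianReal 0 v).real (Ioi t) := by
  have hsplit : {x : ℝ | t < |x|} = Iio (-t) ∪ Ioi t := by
    ext x
    simp [lt_abs, lt_neg, or_comm]
  have hsymm : (gaussianReal 0 v).real (Iio (-t)) = (gaussianReal 0 v).real (Ioi t) := by
    conv_rhs => rw [← neg_zero, ← gaussianReal_map_neg]
    rw [map_measureReal_apply measurable_neg measurableSet_Ioi]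
    congr 1
    ext x
    simp
  have hdisj : Disjoint (Iio (-t)) (Ioi t) :=
    (Iic_disjoint_Ioi (neg_le_self ht)).mono_left Iio_subset_Iic_self
  rw [hsplit, measureReal_union hdisj measurableSet_Ioi, hsymm, two_mul]

lemma measureReal_gaussianReal_abs_gt_eq_stdNormalCDF {v : NNReal} (hv : v ≠ 0) {c : ℝ}
    (hc : 0 ≤ c) :
    (gaussianReal 0 v).real {x | c < |x|} = 2 * (1 - stdNormalCDF (c / √v)) := by
  have hsv : 0 < √(v : ℝ) := by positivity
  have hscale : (gaussianReal 0 1).map (√(v : ℝ) * ·) = gaussianReal 0 v := by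
    rw [gaussianReal_map_const_mul, mul_zero, mul_one]
    congr 1
    ext
    simp
  have hpreimage : (√(v : ℝ) * ·) ⁻¹' {x | c < |x|} = {x | c / √v < |x|} := by
    ext x
    simp [abs_mul, abs_of_pos hsv, div_lt_iff₀ hsv, mul_comm]
  rw [← hscale, map_measureReal_apply (measurable_const_mul _)
    (measurableSet_lt measurable_const measurable_abs), hpreimage,
    measureReal_gaussianReal_abs_gt_eq_two_mul_Ioi (by positivity), one_sub_stdNormalCDF]

lemma integrable_exp_neg_sq_div_two : Integrable fun x : ℝ => exp (-x ^ 2 / 2) := by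
  simpa [neg_div, div_eq_inv_mul, mul_comm] using
    integrable_exp_neg_mul_sq (b := 2⁻¹) (by norm_num)

lemma hasDerivAt_neg_exp_neg_sq_div_two_div {x : ℝ} (hx : x ≠ 0) :
    HasDerivAt (fun x => -exp (-x ^ 2 / 2) / x) ((1 + (x⁻¹) ^ 2) * exp (-x ^ 2 / 2)) x := by
  have hexp : HasDerivAt (fun x => exp (-x ^ 2 / 2)) (exp (-x ^ 2 / 2) * (-x)) x := by
    have hsq : HasDerivAt (fun x : ℝ => -x ^ 2 / 2) (-x) x := by
      simpa using ((hasDerivAt_pow 2 x).neg.div_const 2).congr_deriv (by ring)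
    simpa [mul_comm] using hsq.exp
  refine (hexp.neg.div (hasDerivAt_id x) hx).congr_deriv ?_
  simp only [id, Pi.neg_apply]
  field_simp
  ring

lemma integrableOn_Ioi_one_add_inv_sq_mul_exp {t : ℝ} (ht : 0 < t) :
    IntegrableOn (fun x => (1 + (x⁻¹) ^ 2) * exp (-x ^ 2 / 2)) (Ioi t) := by
  refine ((integrable_exp_neg_sq_div_two.const_mul (1 + (t⁻¹) ^ 2)).integrableOn).mono'
    (by fun_prop) ?_
  filter_upwards [ae_restrict_mem measurableSet_Ioi] with x hx
  have htx : t ≤ x := le_of_lt hx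
  have hx0 : 0 < x := ht.trans hx
  rw [norm_of_nonneg (by positivity)]
  gcongr

lemma integral_Ioi_one_add_inv_sq_mul_exp {t : ℝ} (ht : 0 < t) :
    ∫ x in Ioi t, (1 + (x⁻¹) ^ 2) * exp (-x ^ 2 / 2) = exp (-t ^ 2 / 2) / t := by
  have hlim : Tendsto (fun x : ℝ => -exp (-x ^ 2 / 2) / x) atTop (𝓝 0) := by
    have hexp : Tendsto (fun x : ℝ => exp (-x ^ 2 / 2)) atTop (𝓝 0) :=
      tendsto_exp_atBot.comp ((tendsto_neg_atTop_atBot.comp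
        (tendsto_pow_atTop two_ne_zero)).atBot_div_const two_pos)
    simpa using hexp.neg.div_atTop tendsto_id
  rw [integral_Ioi_of_hasDerivAt_of_tendsto' (fun x hx => hasDerivAt_neg_exp_neg_sq_div_two_div
    (ht.trans_le hx).ne') (integrableOn_Ioi_one_add_inv_sq_mul_exp ht) hlim]
  ring

lemma integral_Ioi_exp_neg_sq_div_two_le {t : ℝ} (ht : 0 < t) :
    ∫ x in Ioi t, exp (-x ^ 2 / 2) ≤ exp (-t ^ 2 / 2) / t := by
  rw [← integral_Ioi_one_add_inv_sq_mul_exp ht]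
  refine setIntegral_mono_on integrable_exp_neg_sq_div_two.integrableOn
    (integrableOn_Ioi_one_add_inv_sq_mul_exp ht) measurableSet_Ioi fun x _ => ?_
  nlinarith [exp_pos (-x ^ 2 / 2), sq_nonneg x⁻¹]

lemma exp_neg_sq_div_two_div_le_mul_integral_Ioi {t : ℝ} (ht : 0 < t) :
    exp (-t ^ 2 / 2) / t ≤ (1 + (t⁻¹) ^ 2) * ∫ x in Ioi t, exp (-x ^ 2 / 2) := by
  rw [← integral_Ioi_one_add_inv_sq_mul_exp ht, ← integral_const_mul]
  refine setIntegral_mono_on (integrableOn_Ioi_one_add_inv_sq_mul_exp ht)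
    (integrable_exp_neg_sq_div_two.const_mul _).integrableOn measurableSet_Ioi fun x hx => ?_
  have htx : t ≤ x := le_of_lt hx
  have hx0 : 0 < x := ht.trans hx
  gcongr

lemma tendsto_integral_Ioi_exp_neg_sq_div_two_mul :
    Tendsto (fun t => (∫ x in Ioi t, exp (-x ^ 2 / 2)) * exp (t ^ 2 / 2) * t) atTop (𝓝 1) := by
  have hlower : Tendsto (fun t : ℝ => (1 + (t⁻¹) ^ 2)⁻¹) atTop (𝓝 1) := by
    simpa using (((tendsto_inv_atTop_zero (𝕜 := ℝ)).pow 2).const_add 1).inv₀ (by norm_num)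
  have hone {t : ℝ} (ht : 0 < t) : exp (-t ^ 2 / 2) / t * exp (t ^ 2 / 2) * t = 1 := by
    rw [neg_div, exp_neg]
    field_simp
  refine tendsto_of_tendsto_of_tendsto_of_le_of_le' hlower tendsto_const_nhds ?_ ?_ <;>
    filter_upwards [eventually_gt_atTop 0] with t ht
  · rw [inv_le_iff_one_le_mul₀' (by positivity)]
    calc 1 = exp (-t ^ 2 / 2) / t * exp (t ^ 2 / 2) * t := (hone ht).symm
      _ ≤ (1 + (t⁻¹) ^ 2) * (∫ x in Ioi t, exp (-x ^ 2 / 2)) * exp (t ^ 2 / 2) * t := by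
        gcongr
        exact exp_neg_sq_div_two_div_le_mul_integral_Ioi ht
      _ = _ := by ring
  · rw [← hone ht]
    gcongr
    exact integral_Ioi_exp_neg_sq_div_two_le ht

lemma tendsto_one_sub_stdNormalCDF_mul_exp_mul :
    Tendsto (fun t => (1 - stdNormalCDF t) * exp (t ^ 2 / 2) * t) atTop
      (𝓝 (√(2 * π))⁻¹) := by
  have h := tendsto_integral_Ioi_exp_neg_sq_div_two_mul.div_const (√(2 * π))
  rw [one_div] at h
  refine h.congr fun t => ?_
  rw [one_sub_stdNormalCDF, measureReal_gaussianReal_zero_one, integral_div]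
  ring

lemma measureReal_gaussianReal_abs_gt_sqrt_log {a σ n : ℝ} (ha : 0 ≤ a) (hσ : 0 < σ)
    (hn : 0 < n) :
    (gaussianReal 0 (σ ^ 2 / n).toNNReal).real {x | a * √(log n / n) < |x|}
      = 2 * (1 - stdNormalCDF (a / σ * √(log n))) := by
  have hv : (σ ^ 2 / n).toNNReal ≠ 0 := by simpa using by positivity
  rw [measureReal_gaussianReal_abs_gt_eq_stdNormalCDF hv (by positivity),
    Real.coe_toNNReal _ (by positivity),
    sqrt_div' _ hn.le, sqrt_div' _ hn.le, sqrt_sq hσ.le]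
  congr 3
  field_simp

lemma rpow_mul_sqrt_log_eq {a σ n : ℝ} (ha : a ≠ 0) (hσ : σ ≠ 0) (hn : 1 ≤ n) :
    n ^ (a ^ 2 / (2 * σ ^ 2)) * √(log n)
      = σ / a * (exp ((a / σ * √(log n)) ^ 2 / 2) * (a / σ * √(log n))) := by
  rw [rpow_def_of_pos (by linarith), mul_pow, sq_sqrt (log_nonneg hn)]
  field_simp

/-- The two-sided moderate deviation probability for a Gaussian sample mean:
with `X̄_n ~ N(0, σ²/n)` and `λ_n = a√((log n)/n)`,
`P(|X̄_n| > λ_n) = 2(1 - Φ((a/σ)√(log n)))` and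
`P(|X̄_n| > λ_n) · n^{a²/(2σ²)} · √(log n) → √2 σ/(a√π)`. -/
theorem gaussian_md_boundary (a σ : ℝ) (ha : 0 < a) (hσ : 0 < σ)
    (P : ℕ → ℝ)
    (hP : ∀ n : ℕ, P n =
      (gaussianReal 0 ((σ ^ 2 / n).toNNReal)
        {x : ℝ | a * Real.sqrt (Real.log n / n) < |x|}).toReal) :
    (∀ n : ℕ, 2 ≤ n →
        P n = 2 * (1 - stdNormalCDF ((a / σ) * Real.sqrt (Real.log n)))) ∧
    Tendsto (fun n : ℕ =>
        P n * (n : ℝ) ^ (a ^ 2 / (2 * σ ^ 2)) * Real.sqrt (Real.log n))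
      atTop (nhds (Real.sqrt 2 * σ / (a * Real.sqrt Real.pi))) := by
  have hP' (n : ℕ) (hn : 1 ≤ n) : P n = 2 * (1 - stdNormalCDF (a / σ * √(log n))) :=
    (hP n).trans (measureReal_gaussianReal_abs_gt_sqrt_log ha.le hσ (by positivity))
  refine ⟨fun n hn => hP' n (by omega), ?_⟩
  have ht : Tendsto (fun n : ℕ => a / σ * √(log n)) atTop atTop :=
    ((tendsto_sqrt_atTop.comp tendsto_log_atTop).comp tendsto_natCast_atTop_atTop).const_mul_atTop
      (by positivity)
  have hlim := (tendsto_one_sub_stdNormalCDF_mul_exp_mul.comp ht).const_mul (2 * (σ / a))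
  have hconst : 2 * (σ / a) * (√(2 * π))⁻¹ = √2 * σ / (a * √π) := by
    rw [sqrt_mul zero_le_two]
    field_simp
    rw [sq_sqrt zero_le_two]
  rw [hconst] at hlim
  refine hlim.congr' ?_
  filter_upwards [eventually_ge_atTop 1] with n hn
  rw [Function.comp_apply, mul_assoc (P n),
    rpow_mul_sqrt_log_eq ha.ne' hσ.ne' (by exact_mod_cast hn), hP' n hn]
  ring
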